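/- Let 0 < ρ < 1, ε ≠ 0 with |ρ+ε| > ρ, and let s, t be the two roots (s < 0 < t) of -(ε+ρ)²z² + ερ(ε+2ρ)z + ρ² = 0. Define m = 1 + ρ² - ρ(t + t^{-1}) and M = 1 + ρ² - ρ(s + s^{-1}). Then 0 < m < (1-ρ)² and M > (1+ρ)². -/
import Mathlib


set_option maxHeartbeats 1000000 in
/-- With `s < 0 < t` the two roots of `-(ε+ρ)²z² + ερ(ε+2ρ)z + ρ² = 0`,
setting `m = 1+ρ²-ρ(t+t⁻¹)` and `M = 1+ρ²-ρ(s+s⁻¹)`, one has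
`0 < m < (1-ρ)²` and `M > (1+ρ)²`. -/
theorem stmt_16 (ρ ε s t : ℝ) (hρ₁ : 0 < ρ) (hρ₂ : ρ < 1) (hε : ε ≠ 0)
    (hbig : ρ < |ρ + ε|)
    (hs : -(ε + ρ) ^ 2 * s ^ 2 + ε * ρ * (ε + 2 * ρ) * s + ρ ^ 2 = 0)
    (ht : -(ε + ρ) ^ 2 * t ^ 2 + ε * ρ * (ε + 2 * ρ) * t + ρ ^ 2 = 0)
    (hs0 : s < 0) (ht0 : 0 < t) :
    0 < 1 + ρ ^ 2 - ρ * (t + t⁻¹) ∧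
    1 + ρ ^ 2 - ρ * (t + t⁻¹) < (1 - ρ) ^ 2 ∧
    (1 + ρ) ^ 2 < 1 + ρ ^ 2 - ρ * (s + s⁻¹) := by
  have hA : ρ ^ 2 < (ε + ρ) ^ 2 := by
    have h1 : ρ ^ 2 < |ρ + ε| ^ 2 := pow_lt_pow_left₀ hbig hρ₁.le two_ne_zero
    rw [sq_abs] at h1
    nlinarith [h1]
  have hA0 : (0:ℝ) < (ε + ρ) ^ 2 := lt_trans (by positivity) hA
  have hstne : s - t ≠ 0 := sub_ne_zero.mpr (ne_of_lt (lt_trans hs0 ht0))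
  -- Vieta: sum of roots
  have hsub : (s - t) * ((ε + ρ) ^ 2 * (s + t) - ρ * ((ε + ρ) ^ 2 - ρ ^ 2)) = 0 := by
    linear_combination ht - hs
  have hsum : (ε + ρ) ^ 2 * (s + t) = ρ * ((ε + ρ) ^ 2 - ρ ^ 2) := by
    rcases mul_eq_zero.mp hsub with h | h
    · exact absurd h hstne
    · linarith
  -- Vieta: product of roots
  have hprod : (ε + ρ) ^ 2 * (s * t) = -ρ ^ 2 := by
    linear_combination hs + s * hsum
  -- locate t and s via the sign of the quadratic at test points 1, ρ, -1
  have key1 : (ε + ρ) ^ 2 * ((1 - s) * (1 - t)) = ((ε + ρ) ^ 2 - ρ ^ 2) * (1 - ρ) := by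
    linear_combination hprod - hsum
  have h1t : t < 1 := by
    have hpos : (0:ℝ) < (1 - s) * (1 - t) := by
      by_contra h
      push_neg at h
      nlinarith [mul_nonpos_of_nonneg_of_nonpos hA0.le h]
    nlinarith [hpos]
  have keyρ : (ε + ρ) ^ 2 * ((ρ - s) * (ρ - t)) = -(ρ ^ 2 * (1 - ρ ^ 2)) := by
    linear_combination hprod - ρ * hsum
  have hρt : ρ < t := by
    have hneg : (ρ - s) * (ρ - t) < 0 := by
      by_contra h
      push_neg at h
      nlinarith [mul_nonneg hA0.le h, mul_pos (mul_pos hρ₁ hρ₁) (show (0:ℝ) < 1 - ρ ^ 2 by nlinarith)]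
    nlinarith [hneg]
  have keym1 : (ε + ρ) ^ 2 * ((1 + s) * (1 + t)) = ((ε + ρ) ^ 2 - ρ ^ 2) * (1 + ρ) := by
    linear_combination hprod + hsum
  have hs1 : -1 < s := by
    have hpos : (0:ℝ) < (1 + s) * (1 + t) := by
      by_contra h
      push_neg at h
      nlinarith [mul_nonpos_of_nonneg_of_nonpos hA0.le h]
    nlinarith [hpos]
  have hinvt : t * t⁻¹ = 1 := mul_inv_cancel₀ (ne_of_gt ht0)
  have hinvs : s * s⁻¹ = 1 := mul_inv_cancel₀ (ne_of_lt hs0)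
  refine ⟨?_, ?_, ?_⟩
  · have hm : (1 + ρ ^ 2 - ρ * (t + t⁻¹)) * t = (1 - ρ * t) * (t - ρ) := by
      linear_combination (-ρ) * hinvt
    have h1 : 0 < 1 - ρ * t := by
      have : ρ * t < 1 * t := mul_lt_mul_of_pos_right hρ₂ ht0
      linarith
    have h2 : 0 < t - ρ := by linarith
    have h3 : 0 < (1 - ρ * t) * (t - ρ) := mul_pos h1 h2
    by_contra hX
    push_neg at hX
    have := mul_nonpos_of_nonpos_of_nonneg hX ht0.le
    linarith
  · have hm : ((1 - ρ) ^ 2 - (1 + ρ ^ 2 - ρ * (t + t⁻¹))) * t = ρ * (t - 1) ^ 2 := by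
      linear_combination ρ * hinvt
    have h2 : 0 < ρ * (t - 1) ^ 2 := by
      have ht1 : t - 1 ≠ 0 := by intro h; rw [sub_eq_zero] at h; exact absurd h (ne_of_lt h1t)
      positivity
    by_contra hX
    push_neg at hX
    have h4 : ((1 - ρ) ^ 2 - (1 + ρ ^ 2 - ρ * (t + t⁻¹))) ≤ 0 := by linarith
    have := mul_nonpos_of_nonpos_of_nonneg h4 ht0.le
    linarith
  · have hm : ((1 + ρ ^ 2 - ρ * (s + s⁻¹)) - (1 + ρ) ^ 2) * s = -(ρ * (s + 1) ^ 2) := by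
      linear_combination (-ρ) * hinvs
    have h2 : 0 < ρ * (s + 1) ^ 2 := by
      have hsne : s + 1 ≠ 0 := by intro h; linarith
      positivity
    by_contra hX
    push_neg at hX
    have h4 : (1 + ρ ^ 2 - ρ * (s + s⁻¹)) - (1 + ρ) ^ 2 ≤ 0 := by linarith
    have h5 := mul_nonneg (neg_nonneg.mpr h4) (neg_nonneg.mpr hs0.le)
    rw [neg_mul_neg] at h5
    linarith
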